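/- For the simplex T_n = conv{e_1, …, e_n, −𝟏} in ℝ^n, the covering radius with respect to ℤ^n equals μ_n(T_n) = n/2. -/

import Mathlib

open MeasureTheory Pointwise

/-- The integer lattice `ℤⁿ` viewed as a subset of `ℝⁿ`. -/
def intLattice (n : ℕ) : Set (EuclideanSpace ℝ (Fin n)) :=
  {x | ∀ j, ∃ m : ℤ, x j = (m : ℝ)}

/-- The `i`-th covering minimum `μ_i(K, ℤⁿ)` of a convex body `K ⊆ ℝⁿ`:
the least `μ > 0` such that `μK + ℤⁿ` meets every `(n-i)`-dimensional affine subspace.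
For `i = n` this is the covering radius. -/
noncomputable def covMin (n i : ℕ) (K : Set (EuclideanSpace ℝ (Fin n))) : ℝ :=
  sInf {μ : ℝ | 0 < μ ∧ ∀ L : AffineSubspace ℝ (EuclideanSpace ℝ (Fin n)),
    (L : Set (EuclideanSpace ℝ (Fin n))).Nonempty →
    Module.finrank ℝ L.direction = n - i →
    ((μ • K + intLattice n) ∩ (L : Set (EuclideanSpace ℝ (Fin n)))).Nonempty}

/-- The simplex `T_n = conv{e_1, …, e_n, -𝟏}`, where `𝟏 = (1, …, 1)`. -/
noncomputable def Tsimplex (n : ℕ) : Set (EuclideanSpace ℝ (Fin n)) :=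
  convexHull ℝ ((Set.range fun j : Fin n => EuclideanSpace.single j (1 : ℝ)) ∪
    {(WithLp.toLp 2 (fun _ => -1 : Fin n → ℝ) : EuclideanSpace ℝ (Fin n))})

/-!
Lift `ℝⁿ` to `ℝⁿ⁺¹` modulo the diagonal: `T_n` is the image of the standard simplex under
`w ↦ (w_{j+1} - w_0)_j`, and `ℤⁿ` is the image of `ℤⁿ⁺¹`. So `w` maps into `μ T_n` iff
`∑ₖ (w_k - w_i) ≤ μ` for every `i`: the coordinates of `w` exceed their minimum by at most `μ`
in total.

For the upper bound, reduce `w` to its fractional parts `β` and, for each `j`, raise by `1` the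
`β_i` below `β_j`. The excess of the `j`-th candidate is `∑ₖ (β_k - β_j) + #{i | β_i < β_j}`;
summed over `j` this counts the pairs `β_i < β_j`, at most `n(n+1)/2`, so some candidate has
excess at most `n/2`.

For the lower bound, the point lifting to `(k/(n+1))ₖ` is a deep hole: for any integer translate,
`n+1` times its coordinates are `n+1` integers with distinct residues mod `n+1`, whose total
excess over their minimum is at least `0 + 1 + ⋯ + n`.
-/

open Finset

section Combinatorics

variable {ι : Type*} [Fintype ι]

theorem two_mul_sum_card_lt_add_sum_card_eq {α : Type*} [LinearOrder α] (β : ι → α) :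
    2 * ∑ j, #{i | β i < β j} + ∑ j, #{i | β i = β j} = Fintype.card ι * Fintype.card ι := by
  have hswap : ∑ j, #{i | β j < β i} = ∑ j, #{i | β i < β j} := by
    simp only [card_filter]
    exact sum_comm
  have htri (j : ι) :
      #{i | β i < β j} + #{i | β j < β i} + #{i | β i = β j} = Fintype.card ι := by
    rw [card_filter, card_filter, card_filter, ← sum_add_distrib, ← sum_add_distrib,
      Fintype.card_eq_sum_ones]
    refine sum_congr rfl fun i _ => ?_
    rcases lt_trichotomy (β i) (β j) with h | h | h
    · simp [h, h.not_gt, h.ne]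
    · simp [h]
    · simp [h, h.not_gt, h.ne']
  calc 2 * ∑ j, #{i | β i < β j} + ∑ j, #{i | β i = β j}
      = ∑ j, (#{i | β i < β j} + #{i | β j < β i} + #{i | β i = β j}) := by
        rw [sum_add_distrib, sum_add_distrib, hswap, two_mul]
    _ = Fintype.card ι * Fintype.card ι := by simp [htri]

theorem card_mul_card_sub_card_le_two_mul_sum_sub {a : ι → ℤ} (ha : Function.Injective a)
    {i : ι} (hi : ∀ k, a i ≤ a k) :
    (Fintype.card ι : ℤ) * Fintype.card ι - Fintype.card ι ≤ 2 * ∑ k, (a k - a i) := by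
  have hrank (k : ι) : (#{l | a l < a k} : ℤ) ≤ a k - a i := by
    have : #{l | a l < a k} ≤ #(Ico (a i) (a k)) :=
      card_le_card_of_injOn a (fun l hl => by simp_all) ha.injOn
    rw [Int.card_Ico] at this
    have := hi k
    omega
  have hdiag (j : ι) : #{l | a l = a j} = 1 :=
    card_eq_one.mpr ⟨j, by ext; simp [ha.eq_iff]⟩
  have hcount := two_mul_sum_card_lt_add_sum_card_eq a
  simp only [hdiag, sum_const, card_univ, smul_eq_mul, mul_one] at hcount
  calc (Fintype.card ι : ℤ) * Fintype.card ι - Fintype.card ι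
      = 2 * ∑ k, (#{l | a l < a k} : ℤ) := by
        have := congrArg (fun m : ℕ => (m : ℤ)) hcount
        push_cast at this
        linarith
    _ ≤ 2 * ∑ k, (a k - a i) := by gcongr with k; exact hrank k

theorem sum_sum_sub_eq_zero {M : Type*} [AddCommGroup M] (β : ι → M) :
    ∑ j, ∑ k, (β k - β j) = 0 := by
  simp [sum_sub_distrib, ← smul_sum]

theorem exists_sum_sub_sub_intCast_le (u : ι → ℝ) :
    ∃ z : ι → ℤ, ∀ i, ∑ k, ((u k - z k) - (u i - z i)) ≤ ((Fintype.card ι : ℝ) - 1) / 2 := by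
  rcases isEmpty_or_nonempty ι with hι | hι
  · exact ⟨0, fun i => isEmptyElim i⟩
  obtain ⟨β, hβ⟩ : ∃ β : ι → ℝ, ∀ i, u i - ⌊u i⌋ = β i ∧ 0 ≤ β i ∧ β i < 1 :=
    ⟨fun i => Int.fract (u i), fun i => ⟨rfl, Int.fract_nonneg _, Int.fract_lt_one _⟩⟩
  have hsum : ∑ j, (∑ k, (β k - β j) + #{i | β i < β j})
      ≤ ∑ _j : ι, ((Fintype.card ι : ℝ) - 1) / 2 := by
    have hdiag : ∑ _j : ι, (1 : ℝ) ≤ ∑ j, (#{i | β i = β j} : ℝ) :=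
      sum_le_sum fun j _ => Nat.one_le_cast.mpr (card_pos.mpr ⟨j, by simp⟩)
    have hcount := congrArg (fun m : ℕ => (m : ℝ)) (two_mul_sum_card_lt_add_sum_card_eq β)
    simp only [sum_const, card_univ, nsmul_one] at hdiag
    push_cast at hcount
    rw [sum_add_distrib, sum_sum_sub_eq_zero, zero_add, sum_const, card_univ, nsmul_eq_mul]
    linarith
  obtain ⟨j, -, hj⟩ := exists_le_of_sum_le univ_nonempty hsum
  refine ⟨fun i => ⌊u i⌋ - if β i < β j then 1 else 0, fun i => ?_⟩
  set w : ι → ℝ := fun k => u k - ((⌊u k⌋ - if β k < β j then 1 else 0 : ℤ) : ℝ)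
  have hw (k : ι) : w k = β k + if β k < β j then 1 else 0 := by
    have := (hβ k).1
    simp only [w]
    split_ifs <;> push_cast <;> linarith
  have hwj : w j ≤ w i := by
    rw [hw, hw, if_neg (lt_irrefl _)]
    split_ifs with h
    · linarith [(hβ j).2.2, (hβ i).2.1]
    · linarith [not_lt.mp h]
  calc ∑ k, (w k - w i) ≤ ∑ k, (w k - w j) := by gcongr
    _ = ∑ k, (β k - β j) + #{k | β k < β j} := by
      simp only [hw, lt_irrefl, if_false, add_zero, add_sub_right_comm _ _ (β j),
        sum_add_distrib, sum_boole]
    _ ≤ ((Fintype.card ι : ℝ) - 1) / 2 := hj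

end Combinatorics

theorem exists_le_sum_sub_sub_intCast (n : ℕ) (z : Fin (n + 1) → ℤ) :
    ∃ i : Fin (n + 1), (n : ℝ) / 2 ≤
      ∑ k : Fin (n + 1), (((k : ℝ) / (n + 1) - z k) - ((i : ℝ) / (n + 1) - z i)) := by
  set a : Fin (n + 1) → ℤ := fun k => k - (n + 1) * z k
  have ha : Function.Injective a := by
    have hmod (k : Fin (n + 1)) : a k % (n + 1) = k := by
      rw [show a k = k + (n + 1) * -z k by simp only [a]; ring, Int.add_mul_emod_self_left]
      exact Int.emod_eq_of_lt (by positivity) (by omega)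
    intro k l hkl
    have := congrArg (· % ((n : ℤ) + 1)) hkl
    simp only [hmod] at this
    exact Fin.ext (by exact_mod_cast this)
  obtain ⟨i, hi⟩ := Finite.exists_min a
  refine ⟨i, ?_⟩
  have hcard := card_mul_card_sub_card_le_two_mul_sum_sub ha hi
  rw [Fintype.card_fin] at hcard
  have hterm (k : Fin (n + 1)) : ((k : ℝ) / (n + 1) - z k) - ((i : ℝ) / (n + 1) - z i)
      = ((a k - a i : ℤ) : ℝ) / (n + 1) := by
    simp only [a]; push_cast; field_simp
  rw [sum_congr rfl fun k _ => hterm k, ← sum_div, le_div_iff₀ (by positivity)]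
  have hcard' : ((n : ℝ) + 1) * (n + 1) - (n + 1) ≤ 2 * ∑ k, ((a k - a i : ℤ) : ℝ) := by
    exact_mod_cast hcard
  linarith

section StdSimplex

variable {ι : Type*} [Fintype ι]

theorem mem_smul_stdSimplex_iff {μ : ℝ} (hμ : 0 < μ) {w : ι → ℝ} :
    w ∈ μ • stdSimplex ℝ ι ↔ (∀ i, 0 ≤ w i) ∧ ∑ i, w i = μ := by
  rw [Set.mem_smul_set_iff_inv_smul_mem₀ hμ.ne']
  simp only [stdSimplex, Set.mem_ofPred_eq, Pi.smul_apply, smul_eq_mul, ← mul_sum,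
    inv_mul_eq_one₀ hμ.ne', mul_nonneg_iff_of_pos_left (inv_pos.mpr hμ), eq_comm]

theorem exists_add_const_mem_smul_stdSimplex_iff [Nonempty ι] {μ : ℝ} (hμ : 0 < μ)
    (w : ι → ℝ) :
    (∃ c : ℝ, (w + fun _ => c) ∈ μ • stdSimplex ℝ ι) ↔ ∀ i, ∑ k, (w k - w i) ≤ μ := by
  have hN : (0 : ℝ) < Fintype.card ι := by exact_mod_cast Fintype.card_pos
  simp only [mem_smul_stdSimplex_iff hμ, Pi.add_apply, sum_add_distrib, sum_const, card_univ,
    nsmul_eq_mul, sum_sub_distrib]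
  constructor
  · rintro ⟨c, hnonneg, hsum⟩ i
    nlinarith [hnonneg i]
  · intro h
    refine ⟨(μ - ∑ k, w k) / Fintype.card ι, fun i => ?_, by field_simp; ring⟩
    rw [← neg_le_iff_add_nonneg', le_div_iff₀ hN]
    linarith [h i]

end StdSimplex

section Tsimplex

variable {n : ℕ}

noncomputable def tsimplexMap (n : ℕ) : (Fin (n + 1) → ℝ) →ₗ[ℝ] EuclideanSpace ℝ (Fin n) where
  toFun w := WithLp.toLp 2 fun j => w j.succ - w 0
  map_add' _ _ := by ext; simp only [PiLp.add_apply, Pi.add_apply]; ring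
  map_smul' _ _ := by
    ext; simp only [PiLp.smul_apply, Pi.smul_apply, smul_eq_mul, RingHom.id_apply]; ring

@[simp]
theorem tsimplexMap_apply (w : Fin (n + 1) → ℝ) (j : Fin n) :
    tsimplexMap n w j = w j.succ - w 0 := rfl

theorem tsimplexMap_eq_tsimplexMap_iff {v w : Fin (n + 1) → ℝ} :
    tsimplexMap n v = tsimplexMap n w ↔ ∃ c : ℝ, v = w + fun _ => c := by
  constructor
  · intro h
    refine ⟨v 0 - w 0, funext fun i => Fin.cases (by simp) (fun j => ?_) i⟩
    have := congrArg (· j) h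
    simp only [tsimplexMap_apply] at this
    simp only [Pi.add_apply]
    linarith
  · rintro ⟨c, rfl⟩
    ext j
    simp only [tsimplexMap_apply, Pi.add_apply]
    ring

theorem tsimplexMap_image_stdSimplex :
    tsimplexMap n '' stdSimplex ℝ (Fin (n + 1)) = Tsimplex n := by
  have hbasis : (tsimplexMap n ∘ fun i j : Fin (n + 1) => if i = j then (1 : ℝ) else 0) =
      Fin.cons (WithLp.toLp 2 fun _ => -1) fun j => EuclideanSpace.single j 1 := by
    funext i
    refine Fin.cases ?_ (fun k => ?_) i <;> ext j
    · simp [(Fin.succ_ne_zero j).symm]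
    · simp [eq_comm]
  rw [← convexHull_basis_eq_stdSimplex, LinearMap.image_convexHull, ← Set.range_comp, hbasis,
    Fin.range_cons, Tsimplex, Set.union_singleton]

theorem tsimplexMap_mem_smul_Tsimplex_iff {μ : ℝ} (hμ : 0 < μ) (w : Fin (n + 1) → ℝ) :
    tsimplexMap n w ∈ μ • Tsimplex n ↔ ∀ i, ∑ k, (w k - w i) ≤ μ := by
  rw [← exists_add_const_mem_smul_stdSimplex_iff hμ, ← tsimplexMap_image_stdSimplex,
    ← image_smul_set, Set.mem_image]
  simp only [tsimplexMap_eq_tsimplexMap_iff]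
  constructor
  · rintro ⟨v, hv, c, rfl⟩
    exact ⟨c, hv⟩
  · rintro ⟨c, hc⟩
    exact ⟨_, hc, c, rfl⟩

theorem mem_intLattice_iff {x : EuclideanSpace ℝ (Fin n)} :
    x ∈ intLattice n ↔ ∃ z : Fin (n + 1) → ℤ, tsimplexMap n (fun i => z i) = x := by
  constructor
  · intro hx
    choose m hm using hx
    refine ⟨Fin.cons 0 m, ?_⟩
    ext j
    simp [hm]
  · rintro ⟨z, rfl⟩ j
    exact ⟨z j.succ - z 0, by simp⟩

end Tsimplex

theorem covMin_self_eq_sInf {n : ℕ} (K : Set (EuclideanSpace ℝ (Fin n))) :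
    covMin n n K = sInf {μ : ℝ | 0 < μ ∧ μ • K + intLattice n = Set.univ} := by
  refine congrArg sInf (Set.ext fun μ => and_congr_right fun _ => ⟨fun h => ?_, fun h L hL _ => ?_⟩)
  · refine Set.eq_univ_of_forall fun x => ?_
    have hrank : Module.finrank ℝ (affineSpan ℝ {x}).direction = n - n := by
      rw [direction_affineSpan, vectorSpan_singleton, Nat.sub_self, finrank_bot]
    obtain ⟨y, hy, hyx⟩ := h _ ⟨x, mem_affineSpan ℝ (Set.mem_singleton x)⟩ hrank
    rwa [← (AffineSubspace.mem_affineSpan_singleton ℝ _).mp hyx]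
  · obtain ⟨x, hx⟩ := hL
    exact ⟨x, h ▸ Set.mem_univ x, hx⟩

theorem smul_Tsimplex_add_intLattice_eq_univ {n : ℕ} (hn : 0 < n) :
    ((n : ℝ) / 2) • Tsimplex n + intLattice n = Set.univ := by
  refine Set.eq_univ_of_forall fun x => ?_
  set u : Fin (n + 1) → ℝ := Fin.cons 0 x.ofLp
  obtain ⟨z, hz⟩ := exists_sum_sub_sub_intCast_le u
  have hx : tsimplexMap n u = x := by ext j; simp [u]
  rw [← hx, ← sub_add_cancel u (fun i => (z i : ℝ)), map_add]
  refine Set.add_mem_add ?_ (mem_intLattice_iff.mpr ⟨z, rfl⟩)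
  rw [tsimplexMap_mem_smul_Tsimplex_iff (div_pos (Nat.cast_pos.mpr hn) two_pos)]
  simpa using hz

theorem le_of_smul_Tsimplex_add_intLattice_eq_univ {n : ℕ} {μ : ℝ} (hμ : 0 < μ)
    (h : μ • Tsimplex n + intLattice n = Set.univ) : (n : ℝ) / 2 ≤ μ := by
  obtain ⟨y, hy, b, hb, hyb⟩ := h.symm ▸ Set.mem_univ (tsimplexMap n fun k => (k : ℝ) / (n + 1))
  obtain ⟨z, rfl⟩ := mem_intLattice_iff.mp hb
  rw [eq_sub_of_add_eq hyb, ← map_sub, tsimplexMap_mem_smul_Tsimplex_iff hμ] at hy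
  obtain ⟨i, hi⟩ := exists_le_sum_sub_sub_intCast n z
  exact hi.trans (hy i)

/-- The covering radius of the simplex `T_n = conv{e_1, …, e_n, -𝟏}` with respect to `ℤⁿ`
equals `n/2`. -/
theorem covering_radius_Tsimplex (n : ℕ) (hn : 1 ≤ n) :
    covMin n n (Tsimplex n) = (n : ℝ) / 2 := by
  have hn' : (0 : ℝ) < n := by exact_mod_cast hn
  rw [covMin_self_eq_sInf]
  exact IsLeast.csInf_eq ⟨⟨by positivity, smul_Tsimplex_add_intLattice_eq_univ hn⟩,
    fun μ ⟨hμ, h⟩ => le_of_smul_Tsimplex_add_intLattice_eq_univ hμ h⟩
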